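/- Let Z be a nonnegative random variable, ν ≥ 1, A ≥ 2, Θ₁ > 0 reals, and suppose P(Z > θ) ≤ 2A·exp(−θ^(2/ν)/(2e·Θ₁^(2/ν))) for all θ > 0. Then for all real p ≥ 1, E[Z^(2p)] ≤ (p^(νp) + (ln A)^(νp)) · ((8eν)^ν · Θ₁²)^p. -/

import Mathlib

/-!
Set `X = Z ^ (2 / ν)`, `q = ν p` and `c = 2 e Θ₁ ^ (2 / ν)`, so that `Z ^ (2 p) = X ^ q` and
`P(X > θ) ≤ 2 A exp (-θ / c)`. Above the level `s = c log (2 A)` the excess `(X - s)⁺` has tail at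
most `exp (-θ / c)`, so by the layer-cake formula its `q`-th moment is at most
`c ^ q Γ(q + 1) ≤ 2 c ^ q (2 q) ^ q`. With `(a + b) ^ q ≤ 2 ^ (q - 1) (a ^ q + b ^ q)` and
`log (2 A) ≤ 2 log A` this gives `E[X ^ q] ≤ (q ^ q + (log A) ^ q) (4 c) ^ q`, which is the case
`ν = 1`; the general constant follows from `q ^ q = ν ^ q p ^ q` and `1 ≤ ν ^ q`.
-/

open MeasureTheory Set Real

lemma rpow_le_rpow_self_mul_exp {x a : ℝ} (hx : 0 ≤ x) (ha : 0 < a) : x ^ a ≤ a ^ a * exp x := by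
  have h : (x / a) ^ a ≤ exp (x / a) ^ a :=
    rpow_le_rpow (by positivity) ((le_add_of_nonneg_right zero_le_one).trans (add_one_le_exp _))
      ha.le
  rwa [div_rpow hx ha.le, ← exp_mul, div_mul_cancel₀ x ha.ne', div_le_iff₀ (by positivity),
    mul_comm] at h

lemma Gamma_add_one_le {q : ℝ} (hq : 0 < q) : Gamma (q + 1) ≤ 2 * (2 * q) ^ q := by
  have hpt : ∀ t, 0 ≤ t → exp (-t) * t ^ q ≤ (2 * q) ^ q * exp (-(1 / 2) * t) := by
    intro t ht
    have h := rpow_le_rpow_self_mul_exp (x := t / 2) (by positivity) hq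
    rw [div_rpow ht zero_le_two, div_le_iff₀ (by positivity)] at h
    have hexp : exp (-t) * exp (t / 2) = exp (-(1 / 2) * t) := by rw [← exp_add]; ring_nf
    calc exp (-t) * t ^ q ≤ exp (-t) * (q ^ q * exp (t / 2) * 2 ^ q) := by gcongr
      _ = (2 * q) ^ q * exp (-(1 / 2) * t) := by rw [mul_rpow zero_le_two hq.le, ← hexp]; ring
  calc Gamma (q + 1) = ∫ t in Ioi 0, exp (-t) * t ^ q := by
        rw [Gamma_eq_integral (by linarith), add_sub_cancel_right]
    _ ≤ ∫ t in Ioi 0, (2 * q) ^ q * exp (-(1 / 2) * t) := by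
        refine integral_mono_of_nonneg ?_
          ((exp_neg_integrableOn_Ioi 0 one_half_pos).const_mul _) ?_
        · filter_upwards [ae_restrict_mem measurableSet_Ioi] with t ht
          exact mul_nonneg (exp_pos _).le (rpow_nonneg (le_of_lt ht) _)
        · filter_upwards [ae_restrict_mem measurableSet_Ioi] with t ht
          exact hpt t (le_of_lt ht)
    _ = 2 * (2 * q) ^ q := by
        rw [integral_const_mul, integral_exp_mul_Ioi (by norm_num)]
        norm_num
        ring

section Moments

variable {Ω : Type*} [MeasurableSpace Ω] {μ : Measure Ω}

lemma measure_lt_rpow_eq {Z : Ω → ℝ} (hZ : ∀ ω, 0 ≤ Z ω) {r θ : ℝ} (hr : 0 < r) (hθ : 0 ≤ θ) :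
    μ {ω | θ < Z ω ^ r} = μ {ω | θ ^ r⁻¹ < Z ω} := by
  congr 1
  ext ω
  exact (rpow_inv_lt_iff_of_pos hθ (hZ ω) hr).symm

theorem lintegral_rpow_le_of_meas_lt_le_exp {f : Ω → ℝ} (hf : 0 ≤ᵐ[μ] f)
    (hfm : AEMeasurable f μ) {q c : ℝ} (hq : 0 < q) (hc : 0 < c)
    (htail : ∀ t, 0 < t → μ {ω | t < f ω} ≤ ENNReal.ofReal (exp (-(t / c)))) :
    ∫⁻ ω, ENNReal.ofReal (f ω ^ q) ∂μ ≤ ENNReal.ofReal (c ^ q * Gamma (q + 1)) := by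
  have hint : IntegrableOn (fun t : ℝ => t ^ (q - 1) * exp (-(c⁻¹ * t))) (Ioi 0) := by
    simpa using integrableOn_rpow_mul_exp_neg_mul_rpow (p := 1) (s := q - 1) (b := c⁻¹)
      (by linarith) one_pos (by positivity)
  have hnn : 0 ≤ᵐ[volume.restrict (Ioi 0)] fun t : ℝ => t ^ (q - 1) * exp (-(c⁻¹ * t)) := by
    filter_upwards [ae_restrict_mem measurableSet_Ioi] with t ht
    exact mul_nonneg (rpow_nonneg (le_of_lt ht) _) (exp_pos _).le
  rw [lintegral_rpow_eq_lintegral_meas_lt_mul μ hf hfm hq]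
  calc ENNReal.ofReal q * ∫⁻ t in Ioi 0, μ {ω | t < f ω} * ENNReal.ofReal (t ^ (q - 1))
      ≤ ENNReal.ofReal q * ∫⁻ t in Ioi 0, ENNReal.ofReal (t ^ (q - 1) * exp (-(c⁻¹ * t))) := by
        gcongr 1
        refine setLIntegral_mono' measurableSet_Ioi fun t ht => ?_
        rw [mul_comm, ENNReal.ofReal_mul (rpow_nonneg (le_of_lt ht) _), inv_mul_eq_div]
        gcongr
        exact htail t ht
    _ = ENNReal.ofReal (c ^ q * Gamma (q + 1)) := by
        rw [← ofReal_integral_eq_lintegral_ofReal hint hnn,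
          integral_rpow_mul_exp_neg_mul_Ioi hq (by positivity), ← ENNReal.ofReal_mul hq.le,
          Gamma_add_one hq.ne', one_div, inv_inv]
        ring_nf

theorem lintegral_rpow_le_of_meas_lt_le_mul_exp [IsProbabilityMeasure μ] {X : Ω → ℝ}
    (hX : 0 ≤ᵐ[μ] X) (hXm : AEMeasurable X μ) {q c B : ℝ} (hq : 1 ≤ q) (hc : 0 < c)
    (hB : 1 ≤ B)
    (htail : ∀ θ, 0 < θ → μ {ω | θ < X ω} ≤ ENNReal.ofReal (B * exp (-(θ / c)))) :
    ∫⁻ ω, ENNReal.ofReal (X ω ^ q) ∂μ ≤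
      ENNReal.ofReal (2 ^ (q - 1) * ((c * log B) ^ q + c ^ q * Gamma (q + 1))) := by
  set s := c * log B
  have hs : 0 ≤ s := mul_nonneg hc.le (log_nonneg hB)
  set V : Ω → ℝ := fun ω => max (X ω - s) 0
  have hVtail : ∀ t, 0 < t → μ {ω | t < V ω} ≤ ENNReal.ofReal (exp (-(t / c))) := by
    intro t ht
    have hset : {ω | t < V ω} = {ω | s + t < X ω} := by
      ext ω
      simp only [V, mem_ofPred_eq, lt_max_iff, ht.not_gt, or_false]
      constructor <;> intro h <;> linarith
    have hexp : B * exp (-((s + t) / c)) = exp (-(t / c)) := by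
      rw [add_div, mul_div_cancel_left₀ _ hc.ne', neg_add, exp_add, exp_neg, exp_log (by linarith)]
      field_simp
    rw [hset, ← hexp]
    exact htail _ (by positivity)
  have hVmoment := lintegral_rpow_le_of_meas_lt_le_exp (f := V) (q := q)
    (ae_of_all _ fun ω => le_max_right _ _) ((hXm.sub_const s).max aemeasurable_const)
    (by linarith) hc hVtail
  have hsplit : ∀ᵐ ω ∂μ, ENNReal.ofReal (X ω ^ q) ≤
      2 ^ (q - 1) * (ENNReal.ofReal (s ^ q) + ENNReal.ofReal (V ω ^ q)) := by
    filter_upwards [hX] with ω hω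
    rw [← ENNReal.ofReal_rpow_of_nonneg hω (by linarith),
      ← ENNReal.ofReal_rpow_of_nonneg hs (by linarith),
      ← ENNReal.ofReal_rpow_of_nonneg (le_max_right _ _) (by linarith)]
    calc ENNReal.ofReal (X ω) ^ q ≤ (ENNReal.ofReal s + ENNReal.ofReal (V ω)) ^ q := by
          rw [← ENNReal.ofReal_add hs (le_max_right _ _)]
          gcongr
          linarith [le_max_left (X ω - s) 0]
      _ ≤ _ := ENNReal.rpow_add_le_mul_rpow_add_rpow _ _ hq
  calc ∫⁻ ω, ENNReal.ofReal (X ω ^ q) ∂μ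
      ≤ ∫⁻ ω, 2 ^ (q - 1) * (ENNReal.ofReal (s ^ q) + ENNReal.ofReal (V ω ^ q)) ∂μ :=
        lintegral_mono_ae hsplit
    _ = 2 ^ (q - 1) * (ENNReal.ofReal (s ^ q) + ∫⁻ ω, ENNReal.ofReal (V ω ^ q) ∂μ) := by
        rw [lintegral_const_mul' _ _ (by simp), lintegral_add_left measurable_const,
          lintegral_const, measure_univ, mul_one]
    _ ≤ 2 ^ (q - 1) * (ENNReal.ofReal (s ^ q) + ENNReal.ofReal (c ^ q * Gamma (q + 1))) := by
        gcongr
    _ = ENNReal.ofReal (2 ^ (q - 1) * (s ^ q + c ^ q * Gamma (q + 1))) := by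
        rw [← ENNReal.ofReal_add (by positivity) (by positivity),
          ENNReal.ofReal_mul (by positivity), ← ENNReal.ofReal_rpow_of_pos two_pos,
          ENNReal.ofReal_ofNat]

theorem lintegral_rpow_le_of_meas_lt_le_two_mul_exp [IsProbabilityMeasure μ] {X : Ω → ℝ}
    (hX : 0 ≤ᵐ[μ] X) (hXm : AEMeasurable X μ) {q c A : ℝ} (hq : 1 ≤ q) (hc : 0 < c)
    (hA : 2 ≤ A)
    (htail : ∀ θ, 0 < θ → μ {ω | θ < X ω} ≤ ENNReal.ofReal (2 * A * exp (-(θ / c)))) :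
    ∫⁻ ω, ENNReal.ofReal (X ω ^ q) ∂μ ≤ ENNReal.ofReal ((q ^ q + log A ^ q) * (4 * c) ^ q) := by
  refine (lintegral_rpow_le_of_meas_lt_le_mul_exp hX hXm hq hc (by linarith) htail).trans
    (ENNReal.ofReal_le_ofReal ?_)
  have hq0 : 0 < q := by linarith
  have hL : 0 ≤ log A := log_nonneg (by linarith)
  have hlog : log (2 * A) ≤ 2 * log A := by
    rw [log_mul two_ne_zero (by linarith), two_mul]
    gcongr
  have h2 : (2 : ℝ) ^ (q - 1) * 2 = 2 ^ q := by rw [rpow_sub_one two_ne_zero]; field_simp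
  have h4 : (4 * c) ^ q = 2 ^ q * 2 ^ q * c ^ q := by
    rw [mul_rpow (by norm_num) hc.le, show (4 : ℝ) = 2 * 2 by norm_num,
      mul_rpow zero_le_two zero_le_two]
  calc 2 ^ (q - 1) * ((c * log (2 * A)) ^ q + c ^ q * Gamma (q + 1))
      ≤ 2 ^ (q - 1) * ((c * (2 * log A)) ^ q + c ^ q * (2 * (2 * q) ^ q)) := by
        have : 0 ≤ log (2 * A) := log_nonneg (by linarith)
        gcongr
        exact Gamma_add_one_le hq0
    _ = 2 ^ q * 2 ^ q * c ^ q * (log A ^ q / 2 + q ^ q) := by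
        rw [mul_rpow hc.le (by positivity), mul_rpow zero_le_two hL, mul_rpow zero_le_two hq0.le,
          ← h2]
        ring
    _ ≤ (q ^ q + log A ^ q) * (4 * c) ^ q := by
        rw [h4, mul_comm (q ^ q + _)]
        have : 0 ≤ log A ^ q := rpow_nonneg hL q
        exact mul_le_mul_of_nonneg_left (by linarith) (by positivity)

end Moments

lemma rescaled_moment_constant_le {ν p L Θ : ℝ} (hν : 1 ≤ ν) (hp : 0 < p) (hL : 0 ≤ L)
    (hΘ : 0 < Θ) :
    ((ν * p) ^ (ν * p) + L ^ (ν * p)) * (4 * (2 * exp 1 * Θ ^ (2 / ν))) ^ (ν * p) ≤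
      (p ^ (ν * p) + L ^ (ν * p)) * ((8 * exp 1 * ν) ^ ν * Θ ^ 2) ^ p := by
  have hν0 : 0 < ν := by linarith
  have hΘpow : (Θ ^ (2 / ν)) ^ (ν * p) = (Θ ^ 2) ^ p := by
    rw [← rpow_mul hΘ.le, ← rpow_natCast, ← rpow_mul hΘ.le]
    congr 1
    push_cast
    field_simp
  have hlhs :
      (4 * (2 * exp 1 * Θ ^ (2 / ν))) ^ (ν * p) = (8 * exp 1) ^ (ν * p) * (Θ ^ 2) ^ p := by
    rw [← mul_assoc, ← mul_assoc, show (4 : ℝ) * 2 = 8 by norm_num,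
      mul_rpow (by positivity) (by positivity), hΘpow]
  have hrhs : ((8 * exp 1 * ν) ^ ν * Θ ^ 2) ^ p =
      ν ^ (ν * p) * ((8 * exp 1) ^ (ν * p) * (Θ ^ 2) ^ p) := by
    rw [mul_rpow (by positivity) (by positivity), ← rpow_mul (by positivity),
      mul_rpow (by positivity) hν0.le]
    ring
  have hνpow : 1 ≤ ν ^ (ν * p) := one_le_rpow hν (by positivity)
  have hLpow : 0 ≤ L ^ (ν * p) := rpow_nonneg hL _
  have hK : 0 ≤ (8 * exp 1) ^ (ν * p) * (Θ ^ 2) ^ p := by positivity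
  rw [hlhs, hrhs, mul_rpow hν0.le hp.le]
  nlinarith [mul_nonneg (mul_nonneg hLpow hK) (sub_nonneg.2 hνpow)]

theorem tail_to_moment_bound {Ω : Type*} [MeasurableSpace Ω]
    (μ : Measure Ω) [IsProbabilityMeasure μ]
    (Z : Ω → ℝ) (hZ : ∀ ω, 0 ≤ Z ω)
    (ν A Θ₁ : ℝ) (hν : 1 ≤ ν) (hA : 2 ≤ A) (hΘ₁ : 0 < Θ₁)
    (htail : ∀ θ : ℝ, 0 < θ →
      (μ {ω | θ < Z ω}).toReal ≤
        2 * A * Real.exp (-(θ ^ (2 / ν)) / (2 * Real.exp 1 * Θ₁ ^ (2 / ν))))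
    (p : ℝ) (hp : 1 ≤ p) :
    ∫ ω, Z ω ^ (2 * p) ∂μ ≤
      (p ^ (ν * p) + Real.log A ^ (ν * p)) * ((8 * Real.exp 1 * ν) ^ ν * Θ₁ ^ 2) ^ p := by
  have hν0 : 0 < ν := by linarith
  have hL : 0 ≤ log A := log_nonneg (by linarith)
  have hZX : ∀ ω, Z ω ^ (2 * p) = (Z ω ^ (2 / ν)) ^ (ν * p) := fun ω => by
    rw [← rpow_mul (hZ ω)]; congr 1; field_simp
  have hRHS : 0 ≤ (p ^ (ν * p) + log A ^ (ν * p)) * ((8 * exp 1 * ν) ^ ν * Θ₁ ^ 2) ^ p := by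
    have := rpow_nonneg hL (ν * p)
    positivity
  by_cases hm : AEStronglyMeasurable (fun ω => Z ω ^ (2 * p)) μ
  swap
  · rw [integral_non_aestronglyMeasurable hm]
    exact hRHS
  have hXm : AEMeasurable (fun ω => Z ω ^ (2 / ν)) μ := by
    refine (hm.aemeasurable.pow_const (ν * p)⁻¹).congr (ae_of_all _ fun ω => ?_)
    change (Z ω ^ (2 * p)) ^ (ν * p)⁻¹ = Z ω ^ (2 / ν)
    rw [hZX, ← rpow_mul (rpow_nonneg (hZ ω) _), mul_inv_cancel₀ (by positivity), rpow_one]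
  have hXtail : ∀ θ, 0 < θ → μ {ω | θ < Z ω ^ (2 / ν)} ≤
      ENNReal.ofReal (2 * A * exp (-(θ / (2 * exp 1 * Θ₁ ^ (2 / ν))))) := by
    intro θ hθ
    have h := htail _ (rpow_pos_of_pos hθ (2 / ν)⁻¹)
    rw [rpow_inv_rpow hθ.le (by positivity), neg_div] at h
    rwa [measure_lt_rpow_eq hZ (by positivity) hθ.le,
      ENNReal.le_ofReal_iff_toReal_le (measure_ne_top _ _) (by positivity)]
  rw [integral_eq_lintegral_of_nonneg_ae (ae_of_all _ fun ω => rpow_nonneg (hZ ω) _) hm]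
  refine ENNReal.toReal_le_of_le_ofReal hRHS ?_
  simp_rw [hZX]
  exact (lintegral_rpow_le_of_meas_lt_le_two_mul_exp (ae_of_all _ fun ω => rpow_nonneg (hZ ω) _)
    hXm (by nlinarith) (by positivity) hA hXtail).trans
    (ENNReal.ofReal_le_ofReal (rescaled_moment_constant_le hν (by linarith) hL hΘ₁))
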